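/- arXiv:1510.05788 — 3 statements merged into one kernel-verified Lean document; each statement's English description precedes it below -/
import Mathlib

section
/- One has the identity |Rm|² = |Sm|² − α·Sic(v,v) − ((m+3)/2)·α²·|v|⁴. -/
/-!
In an orthonormal basis, `Sm = Rm - (α/2) P` where
`P_ijkl = δ_jl v_i v_k + δ_kl v_i v_j`, so `|Sm|² = |Rm|² - α ⟨Rm, P⟩ + (α²/4) |P|²`.
Antisymmetry of `Rm` in its last two slots kills the `δ_kl` half of `⟨Rm, P⟩` and turns the
other half into `-Ric(v, v)`, while `|P|² = 2 (m + 1) |v|⁴`. Substituting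
`Sic(v, v) = Ric(v, v) - α |v|⁴` gives the identity.
-/

open scoped RealInnerProductSpace BigOperators

open Finset

section KroneckerSums

variable {ι : Type*} [Fintype ι] [DecidableEq ι]

theorem sum_sq_sub_ite_add_ite (x : ι → ℝ) (j k : ι) (p q : ℝ) :
    ∑ l, (x l - ((if j = l then p else 0) + (if k = l then q else 0))) ^ 2 =
      ∑ l, x l ^ 2 - 2 * (p * x j + q * x k) + p ^ 2 + q ^ 2 +
        (if k = j then 2 * p * q else 0) := by
  have expand : ∀ l, (x l - ((if j = l then p else 0) + (if k = l then q else 0))) ^ 2 =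
      x l ^ 2 + (if j = l then p ^ 2 - 2 * p * x l else 0) +
        (if k = l then q ^ 2 - 2 * q * x l else 0) +
        (if j = l then (if k = l then 2 * p * q else 0) else 0) := by
    intro l
    split_ifs <;> ring
  simp only [expand, sum_add_distrib, sum_ite_eq, mem_univ, if_true]
  ring

theorem sum_sq_sub_kronecker (r : ι → ι → ι → ι → ℝ) (c : ι → ℝ) (a : ℝ)
    (hr : ∀ i j k l, r i j k l = - r i j l k) :
    ∑ i, ∑ j, ∑ k, ∑ l, (r i j k l -
        ((if j = l then a * c i * c k else 0) + (if k = l then a * c i * c j else 0))) ^ 2 =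
      ∑ i, ∑ j, ∑ k, ∑ l, r i j k l ^ 2 + 2 * a * ∑ i, ∑ j, ∑ k, c i * c k * r i j j k
        + 2 * (Fintype.card ι + 1) * a ^ 2 * (∑ i, c i ^ 2) ^ 2 := by
  have hdiag : ∀ i j k, r i j k k = 0 := fun i j k => by linarith [hr i j k k]
  have hswap : ∀ i j k, r i j k j = - r i j j k := fun i j k => hr i j k j
  have hcross : ∀ i j k, 2 * (a * c i * c k * -r i j j k) = -(2 * a) * (c i * c k * r i j j k) :=
    fun i j k => by ring
  have hsq : ∀ i j, (a * c i * c j) ^ 2 = a ^ 2 * (c i ^ 2 * c j ^ 2) := fun i j => by ring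
  have hmixed : ∀ i j, 2 * (a * c i * c j) * (a * c i * c j) = 2 * a ^ 2 * (c i ^ 2 * c j ^ 2) :=
    fun i j => by ring
  simp only [sum_sq_sub_ite_add_ite, hdiag, hswap, sum_add_distrib, sum_sub_distrib,
    sum_ite_eq', mem_univ, if_true, sum_const, card_univ, nsmul_eq_mul, mul_zero, add_zero,
    hcross, hsq, hmixed, ← mul_sum]
  simp only [← sum_mul]
  ring

end KroneckerSums

theorem OrthonormalBasis.ricci_contraction_eq_sum_inner_mul_inner
    {V : Type*} [NormedAddCommGroup V] [InnerProductSpace ℝ V] {ι : Type*} [Fintype ι]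
    (e : OrthonormalBasis ι ℝ V) (Rm : V →ₗ[ℝ] V →ₗ[ℝ] V →ₗ[ℝ] V →ₗ[ℝ] ℝ) (x y : V) :
    ∑ j, Rm x (e j) (e j) y =
      ∑ i, ∑ j, ∑ k, ⟪e i, x⟫ * ⟪e k, y⟫ * Rm (e i) (e j) (e j) (e k) := by
  conv_lhs => rw [← e.sum_repr' x, ← e.sum_repr' y]
  simp only [map_sum, map_smul, LinearMap.sum_apply, LinearMap.smul_apply, smul_eq_mul, mul_sum]
  rw [sum_comm_cycle]
  exact sum_congr rfl fun i _ => sum_congr rfl fun j _ => sum_congr rfl fun k _ => by ring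

theorem normsq_rm_eq_normsq_sm_general
    {V : Type*} [NormedAddCommGroup V] [InnerProductSpace ℝ V]
    {m : ℕ} (e : OrthonormalBasis (Fin m) ℝ V)
    (Rm : V →ₗ[ℝ] V →ₗ[ℝ] V →ₗ[ℝ] V →ₗ[ℝ] ℝ)
    (hanti2 : ∀ x y z w : V, Rm x y z w = - Rm x y w z)
    (α : ℝ) (v : V)
    (Sm : V → V → V → V → ℝ)
    (hSm : ∀ x y z w : V, Sm x y z w =
      Rm x y z w - (α / 2) * (⟪y, w⟫ * ⟪x, v⟫ * ⟪z, v⟫ + ⟪z, w⟫ * ⟪x, v⟫ * ⟪y, v⟫))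
    (Sic : V → V → ℝ)
    (hSic : ∀ x y : V, Sic x y = (∑ i, Rm x (e i) (e i) y) - α * ⟪x, v⟫ * ⟪y, v⟫) :
    (∑ i, ∑ j, ∑ k, ∑ l, (Rm (e i) (e j) (e k) (e l)) ^ 2) =
      (∑ i, ∑ j, ∑ k, ∑ l, (Sm (e i) (e j) (e k) (e l)) ^ 2)
        - α * Sic v v - (((m : ℝ) + 3) / 2) * α ^ 2 * ‖v‖ ^ 4 := by
  have hSm_basis : ∀ i j k l, Sm (e i) (e j) (e k) (e l) = Rm (e i) (e j) (e k) (e l) -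
      ((if j = l then α / 2 * ⟪e i, v⟫ * ⟪e k, v⟫ else 0) +
        (if k = l then α / 2 * ⟪e i, v⟫ * ⟪e j, v⟫ else 0)) := by
    intro i j k l
    rw [hSm, e.inner_eq_ite, e.inner_eq_ite]
    split_ifs <;> ring
  have hexpand := sum_sq_sub_kronecker (fun i j k l => Rm (e i) (e j) (e k) (e l))
    (fun i => ⟪e i, v⟫) (α / 2) fun i j k l => hanti2 _ _ _ _
  simp only [hSm_basis, hexpand, hSic, e.ricci_contraction_eq_sum_inner_mul_inner,
    e.sum_sq_inner_right, real_inner_self_eq_norm_sq, Fintype.card_fin]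
  ring

/-- `|Rm|² = |Sm|² − α·Sic(v,v) − ((m+3)/2)·α²·|v|⁴`. -/
theorem normsq_rm_eq_normsq_sm
    {V : Type*} [NormedAddCommGroup V] [InnerProductSpace ℝ V]
    {m : ℕ} (e : OrthonormalBasis (Fin m) ℝ V)
    (Rm : V →ₗ[ℝ] V →ₗ[ℝ] V →ₗ[ℝ] V →ₗ[ℝ] ℝ)
    (hanti1 : ∀ x y z w : V, Rm x y z w = - Rm y x z w)
    (hanti2 : ∀ x y z w : V, Rm x y z w = - Rm x y w z)
    (hsymm : ∀ x y z w : V, Rm x y z w = Rm z w x y)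
    (hbianchi : ∀ x y z w : V, Rm x y z w + Rm y z x w + Rm z x y w = 0)
    (α : ℝ) (v : V)
    (Sm : V → V → V → V → ℝ)
    (hSm : ∀ x y z w : V, Sm x y z w =
      Rm x y z w - (α / 2) * (⟪y, w⟫ * ⟪x, v⟫ * ⟪z, v⟫ + ⟪z, w⟫ * ⟪x, v⟫ * ⟪y, v⟫))
    (Sic : V → V → ℝ)
    (hSic : ∀ x y : V, Sic x y = (∑ i, Rm x (e i) (e i) y) - α * ⟪x, v⟫ * ⟪y, v⟫) :
    (∑ i, ∑ j, ∑ k, ∑ l, (Rm (e i) (e j) (e k) (e l)) ^ 2) =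
      (∑ i, ∑ j, ∑ k, ∑ l, (Sm (e i) (e j) (e k) (e l)) ^ 2)
        - α * Sic v v - (((m : ℝ) + 3) / 2) * α ^ 2 * ‖v‖ ^ 4 :=
  normsq_rm_eq_normsq_sm_general e Rm hanti2 α v Sm hSm Sic hSic
end

section
/- (Pointwise form of Lemma 3.1.) One has the identity |Rm|² − 4|Ric|² + R² = |Sm|² − 4|Sic|² + S² − ((m+9)/2)·α²·|v|⁴ − 9α·Sic(v,v) + 2α·S·|v|². -/
open scoped RealInnerProductSpace BigOperators

/-! Write `Sm = Rm - (α/2) P` and `Sic = Ric - α v ⊗ v` and expand both squared norms in the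
orthonormal basis. Antisymmetry of `Rm` in its last two slots kills one half of the pairing
`⟨Rm, P⟩` and turns the other into `-Ric(v,v)`, while `|P|² = 2(m+1)|v|⁴`; similarly
`⟨Ric, v ⊗ v⟩ = Ric(v,v)` and `|v ⊗ v|² = |v|⁴`. What remains is a polynomial identity in
`R`, `Ric(v,v)`, `α` and `|v|²`. -/

open Finset

section Coordinates

variable {ι : Type*} [Fintype ι]

theorem sum_sq_sub_mul_outer (b : ι → ι → ℝ) (a : ι → ℝ) (c : ℝ) :
    ∑ i, ∑ j, (b i j - c * a i * a j) ^ 2 =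
      ∑ i, ∑ j, b i j ^ 2 - 2 * c * ∑ i, ∑ j, b i j * a i * a j + c ^ 2 * (∑ i, a i ^ 2) ^ 2 := by
  have hsq : (∑ i, a i ^ 2) ^ 2 = ∑ i, ∑ j, a i ^ 2 * a j ^ 2 := by rw [sq, sum_mul_sum]
  rw [hsq, mul_sum, mul_sum, ← sum_sub_distrib, ← sum_add_distrib]
  exact sum_congr rfl fun i _ => by
    simp only [mul_sum, ← sum_sub_distrib, ← sum_add_distrib]
    exact sum_congr rfl fun j _ => by ring

variable [DecidableEq ι]

theorem sum_sq_sub_mul_kronecker_outer (r : ι → ι → ι → ι → ℝ) (hr : ∀ i j k, r i j k k = 0)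
    (a : ι → ℝ) (c : ℝ) :
    ∑ i, ∑ j, ∑ k, ∑ l, (r i j k l - c *
        ((if j = l then 1 else 0) * a i * a k + (if k = l then 1 else 0) * a i * a j)) ^ 2 =
      ∑ i, ∑ j, ∑ k, ∑ l, r i j k l ^ 2 - 2 * c * ∑ i, ∑ j, ∑ k, r i j k j * a i * a k
        + 2 * (Fintype.card ι + 1) * c ^ 2 * (∑ i, a i ^ 2) ^ 2 := by
  have hsq : (∑ i, a i ^ 2) ^ 2 = ∑ i, ∑ j, a i ^ 2 * a j ^ 2 := by rw [sq, sum_mul_sum]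
  set p : ι → ι → ι → ι → ℝ := fun i j k l => (if j = l then 1 else 0) * a i * a k
  set q : ι → ι → ι → ι → ℝ := fun i j k l => (if k = l then 1 else 0) * a i * a j
  have hrp : ∑ i, ∑ j, ∑ k, ∑ l, r i j k l * p i j k l = ∑ i, ∑ j, ∑ k, r i j k j * a i * a k := by
    simp [p, mul_ite, ite_mul, mul_assoc]
  have hrq : ∑ i, ∑ j, ∑ k, ∑ l, r i j k l * q i j k l = 0 := by
    simp [q, hr]
  have hpp : ∑ i, ∑ j, ∑ k, ∑ l, p i j k l ^ 2 = Fintype.card ι * (∑ i, a i ^ 2) ^ 2 := by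
    simp [p, mul_pow, ite_pow, ite_mul, hsq, mul_sum]
  have hqq : ∑ i, ∑ j, ∑ k, ∑ l, q i j k l ^ 2 = Fintype.card ι * (∑ i, a i ^ 2) ^ 2 := by
    simp [q, mul_pow, ite_pow, ite_mul, hsq, mul_sum]
  have hpq : ∑ i, ∑ j, ∑ k, ∑ l, p i j k l * q i j k l = (∑ i, a i ^ 2) ^ 2 := by
    simp only [p, q, hsq, ite_mul, one_mul, zero_mul, mul_ite, mul_zero, sum_ite_eq, mem_univ,
      ↓reduceIte]
    exact sum_congr rfl fun i _ => sum_congr rfl fun j _ => by ring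
  calc _ = ∑ i, ∑ j, ∑ k, ∑ l, (r i j k l ^ 2 - 2 * c * (r i j k l * p i j k l)
        - 2 * c * (r i j k l * q i j k l) + c ^ 2 * (p i j k l ^ 2 + q i j k l ^ 2)
        + 2 * c ^ 2 * (p i j k l * q i j k l)) := by
        simp only [p, q]; congr! 4; ring
    _ = _ := by
      simp only [sum_add_distrib, sum_sub_distrib, ← mul_sum, hrp, hrq, hpp, hqq, hpq]
      ring

end Coordinates

section Curvature

variable {ι V : Type*} [Fintype ι] [NormedAddCommGroup V] [InnerProductSpace ℝ V]
  (e : OrthonormalBasis ι ℝ V)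

theorem OrthonormalBasis.sum_sum_apply_mul_inner_mul_inner (B : V →ₗ[ℝ] V →ₗ[ℝ] ℝ) (x y : V) :
    ∑ i, ∑ j, B (e i) (e j) * ⟪e i, x⟫ * ⟪e j, y⟫ = B x y := by
  conv_rhs => rw [← e.sum_repr' x, ← e.sum_repr' y]
  simp only [map_sum, map_smul, LinearMap.sum_apply, LinearMap.smul_apply, smul_eq_mul, mul_sum]
  rw [sum_comm]
  exact sum_congr rfl fun i _ => sum_congr rfl fun j _ => by ring

variable (Rm : V →ₗ[ℝ] V →ₗ[ℝ] V →ₗ[ℝ] V →ₗ[ℝ] ℝ)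

noncomputable def ricci : V →ₗ[ℝ] V →ₗ[ℝ] ℝ := ∑ i, (Rm.flip (e i)).flip (e i)

theorem ricci_apply (x y : V) : ricci e Rm x y = ∑ i, Rm x (e i) (e i) y := by
  simp [ricci, LinearMap.sum_apply]

theorem sum_apply_mul_inner_mul_inner_eq_neg_ricci
    (hanti : ∀ x y z w : V, Rm x y z w = - Rm x y w z) (v : V) :
    ∑ i, ∑ j, ∑ k, Rm (e i) (e j) (e k) (e j) * ⟪e i, v⟫ * ⟪e k, v⟫ = - ricci e Rm v v := by
  rw [← e.sum_sum_apply_mul_inner_mul_inner, ← sum_neg_distrib]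
  refine sum_congr rfl fun i _ => ?_
  simp only [ricci_apply, sum_mul, ← sum_neg_distrib]
  rw [sum_comm]
  exact sum_congr rfl fun k _ => sum_congr rfl fun j _ => by rw [hanti]; ring

end Curvature

theorem gauss_bonnet_integrand_identity_general
    {V : Type*} [NormedAddCommGroup V] [InnerProductSpace ℝ V]
    {m : ℕ} (e : OrthonormalBasis (Fin m) ℝ V)
    (Rm : V →ₗ[ℝ] V →ₗ[ℝ] V →ₗ[ℝ] V →ₗ[ℝ] ℝ)
    (hanti2 : ∀ x y z w : V, Rm x y z w = - Rm x y w z)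
    (α : ℝ) (v : V)
    (Sm : V → V → V → V → ℝ)
    (hSm : ∀ x y z w : V, Sm x y z w =
      Rm x y z w - (α / 2) * (⟪y, w⟫ * ⟪x, v⟫ * ⟪z, v⟫ + ⟪z, w⟫ * ⟪x, v⟫ * ⟪y, v⟫))
    (Ric : V → V → ℝ)
    (hRic : ∀ x y : V, Ric x y = ∑ i, Rm x (e i) (e i) y)
    (R : ℝ)
    (Sic : V → V → ℝ)
    (hSic : ∀ x y : V, Sic x y = Ric x y - α * ⟪x, v⟫ * ⟪y, v⟫)
    (S : ℝ) (hS : S = R - α * ‖v‖ ^ 2) :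
    (∑ i, ∑ j, ∑ k, ∑ l, (Rm (e i) (e j) (e k) (e l)) ^ 2)
        - 4 * (∑ i, ∑ j, (Ric (e i) (e j)) ^ 2) + R ^ 2 =
      (∑ i, ∑ j, ∑ k, ∑ l, (Sm (e i) (e j) (e k) (e l)) ^ 2)
        - 4 * (∑ i, ∑ j, (Sic (e i) (e j)) ^ 2) + S ^ 2
        - (((m : ℝ) + 9) / 2) * α ^ 2 * ‖v‖ ^ 4
        - 9 * α * Sic v v + 2 * α * S * ‖v‖ ^ 2 := by
  obtain rfl : Ric = fun x y => ricci e Rm x y := by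
    funext x y; rw [hRic, ricci_apply]
  have hδ : ∀ i j, ⟪e i, e j⟫ = if i = j then 1 else 0 := orthonormal_iff_ite.mp e.orthonormal
  have hRm_diag : ∀ i j k, Rm (e i) (e j) (e k) (e k) = 0 := fun i j k => by
    linarith [hanti2 (e i) (e j) (e k) (e k)]
  have hSm_sum : ∑ i, ∑ j, ∑ k, ∑ l, Sm (e i) (e j) (e k) (e l) ^ 2 =
      ∑ i, ∑ j, ∑ k, ∑ l, Rm (e i) (e j) (e k) (e l) ^ 2 + α * ricci e Rm v v
        + (m + 1) / 2 * α ^ 2 * ‖v‖ ^ 4 := by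
    simp only [hSm, hδ]
    rw [sum_sq_sub_mul_kronecker_outer _ hRm_diag,
      sum_apply_mul_inner_mul_inner_eq_neg_ricci e Rm hanti2, e.sum_sq_inner_right, Fintype.card_fin]
    ring
  have hSic_sum : ∑ i, ∑ j, Sic (e i) (e j) ^ 2 =
      ∑ i, ∑ j, ricci e Rm (e i) (e j) ^ 2 - 2 * α * ricci e Rm v v + α ^ 2 * ‖v‖ ^ 4 := by
    simp only [hSic]
    rw [sum_sq_sub_mul_outer, e.sum_sum_apply_mul_inner_mul_inner, e.sum_sq_inner_right]
    ring
  rw [hSm_sum, hSic_sum, hSic, hS, real_inner_self_eq_norm_sq]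
  ring

/-- Pointwise form of Lemma 3.1:
`|Rm|² − 4|Ric|² + R² = |Sm|² − 4|Sic|² + S² − ((m+9)/2)·α²·|v|⁴ − 9α·Sic(v,v) + 2α·S·|v|²`. -/
theorem gauss_bonnet_integrand_identity
    {V : Type*} [NormedAddCommGroup V] [InnerProductSpace ℝ V]
    {m : ℕ} (e : OrthonormalBasis (Fin m) ℝ V)
    (Rm : V →ₗ[ℝ] V →ₗ[ℝ] V →ₗ[ℝ] V →ₗ[ℝ] ℝ)
    (hanti1 : ∀ x y z w : V, Rm x y z w = - Rm y x z w)
    (hanti2 : ∀ x y z w : V, Rm x y z w = - Rm x y w z)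
    (hsymm : ∀ x y z w : V, Rm x y z w = Rm z w x y)
    (hbianchi : ∀ x y z w : V, Rm x y z w + Rm y z x w + Rm z x y w = 0)
    (α : ℝ) (v : V)
    (Sm : V → V → V → V → ℝ)
    (hSm : ∀ x y z w : V, Sm x y z w =
      Rm x y z w - (α / 2) * (⟪y, w⟫ * ⟪x, v⟫ * ⟪z, v⟫ + ⟪z, w⟫ * ⟪x, v⟫ * ⟪y, v⟫))
    (Ric : V → V → ℝ)
    (hRic : ∀ x y : V, Ric x y = ∑ i, Rm x (e i) (e i) y)
    (R : ℝ) (hR : R = ∑ i, Ric (e i) (e i))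
    (Sic : V → V → ℝ)
    (hSic : ∀ x y : V, Sic x y = Ric x y - α * ⟪x, v⟫ * ⟪y, v⟫)
    (S : ℝ) (hS : S = R - α * ‖v‖ ^ 2) :
    (∑ i, ∑ j, ∑ k, ∑ l, (Rm (e i) (e j) (e k) (e l)) ^ 2)
        - 4 * (∑ i, ∑ j, (Ric (e i) (e j)) ^ 2) + R ^ 2 =
      (∑ i, ∑ j, ∑ k, ∑ l, (Sm (e i) (e j) (e k) (e l)) ^ 2)
        - 4 * (∑ i, ∑ j, (Sic (e i) (e j)) ^ 2) + S ^ 2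
        - (((m : ℝ) + 9) / 2) * α ^ 2 * ‖v‖ ^ 4
        - 9 * α * Sic v v + 2 * α * S * ‖v‖ ^ 2 :=
  gauss_bonnet_integrand_identity_general e Rm hanti2 α v Sm hSm Ric hRic R Sic hSic S hS
end

section
/- (Contraction identity (2.16).) One has Sm(Sic',Sic') = (1/(m−2))·[((2m−1)/(m−1))·S'·|Sic'|² − 2·tr(Sic'³) − S'³/(m−1)] + W(Sic',Sic') − (1/(m−1))·(C/m + α|v|²/(m−2))·(S'² − |Sic'|²) + (2α/(m−2))·(S'·Sic'(v,v) − (m/2)·(Sic'²)(v,v)), where (Sic'²)(v,v) denotes the quadratic form of the square of Sic' evaluated at v. -/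
/-!
Everything is computed in the orthonormal frame `e`. There `Rm` cancels from
`Sm(Sic',Sic') - W(Sic',Sic')`: by the definitions of `Sm` and `W`,
`Sm - W = (1/(m-2)) Ric ⊙ g - R/(2(m-1)(m-2)) g ⊙ g - (α/2) T_v`, with `⊙` the Kulkarni–Nomizu
product and `T_v` the correction in `Sm`, while `Ric = Sic' + α v ⊗ v - (C/m) g`.
For a symmetric matrix `A`, `(P ⊙ Q)(A,A) = 2 (tr(PA) tr(QA) - tr(PAQA))` and
`T_v(A,A) = 2 ⟨v, A² v⟩`, so both sides become polynomials in `tr A = S'`, `tr A²`, `tr A³`,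
`⟨v, A v⟩`, `⟨v, A² v⟩` and `|v|²`.
-/

open scoped RealInnerProductSpace BigOperators

open Matrix

namespace Matrix

variable {ι R : Type*} [Fintype ι] [CommRing R]

/-- `contract T A B` is the paper's `T(A,B)`. -/
def contract (T : ι → ι → ι → ι → R) (A B : Matrix ι ι R) : R :=
  ∑ i, ∑ j, ∑ k, ∑ l, T k i j l * A k l * B i j

def kulkarniNomizu (P Q : Matrix ι ι R) : ι → ι → ι → ι → R :=
  fun x y z w => P x w * Q y z + P y z * Q x w - P x z * Q y w - P y w * Q x z

lemma contract_add (T T' : ι → ι → ι → ι → R) (A B : Matrix ι ι R) :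
    contract (T + T') A B = contract T A B + contract T' A B := by
  simp only [contract, Pi.add_apply, add_mul, Finset.sum_add_distrib]

lemma contract_sub (T T' : ι → ι → ι → ι → R) (A B : Matrix ι ι R) :
    contract (T - T') A B = contract T A B - contract T' A B := by
  simp only [contract, Pi.sub_apply, sub_mul, Finset.sum_sub_distrib]

lemma contract_smul (c : R) (T : ι → ι → ι → ι → R) (A B : Matrix ι ι R) :
    contract (c • T) A B = c * contract T A B := by
  simp only [contract, Pi.smul_apply, smul_eq_mul, mul_assoc, Finset.mul_sum]

lemma contract_kulkarniNomizu (P Q A B : Matrix ι ι R) :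
    contract (kulkarniNomizu P Q) A B =
      trace (P * Aᵀ) * trace (Q * Bᵀ) + trace (Q * Aᵀ) * trace (P * Bᵀ)
        - trace (Q * Aᵀ * P * Bᵀ) - trace (P * Aᵀ * Q * Bᵀ) := by
  simp only [contract, kulkarniNomizu, trace, diag, mul_apply, transpose_apply,
    Finset.sum_mul, Finset.mul_sum, sub_mul, add_mul, Finset.sum_add_distrib,
    Finset.sum_sub_distrib]
  simp only [mul_comm, mul_left_comm]

lemma trace_vecMulVec_mul (u w : ι → R) (M : Matrix ι ι R) :
    trace (vecMulVec u w * M) = w ⬝ᵥ M *ᵥ u := by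
  rw [vecMulVec_mul, trace_vecMulVec, dotProduct_mulVec, dotProduct_comm]

lemma trace_mul_transpose (A : Matrix ι ι R) : trace (A * Aᵀ) = ∑ i, ∑ j, A i j ^ 2 := by
  simp only [trace, diag, mul_apply, transpose_apply, sq]

lemma trace_mul_mul (A B C : Matrix ι ι R) :
    trace (A * B * C) = ∑ i, ∑ j, ∑ k, A i j * B j k * C k i := by
  simp only [trace, diag, mul_apply, Finset.sum_mul]
  exact Finset.sum_congr rfl fun _ _ => Finset.sum_comm

variable [DecidableEq ι]

/-- In the frame `e`, `Sm = Rm - (α / 2) • vecTensor (fun i => ⟪e i, v⟫)`. -/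
def vecTensor (u : ι → R) : ι → ι → ι → ι → R :=
  fun x y z w => (1 : Matrix ι ι R) y w * u x * u z + (1 : Matrix ι ι R) z w * u x * u y

lemma contract_vecTensor (u : ι → R) (A B : Matrix ι ι R) :
    contract (vecTensor u) A B = u ⬝ᵥ (A * B) *ᵥ u + u ⬝ᵥ (B * Aᵀ) *ᵥ u := by
  rw [← mulVec_mulVec, ← mulVec_mulVec, dotProduct_mulVec u A, mulVec_transpose]
  simp only [contract, vecTensor, one_apply, dotProduct, mulVec, vecMul, add_mul, ite_mul,
    one_mul, zero_mul, Finset.sum_add_distrib, Finset.sum_ite_eq, Finset.mem_univ, if_true,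
    Finset.sum_mul, Finset.mul_sum]
  simp only [mul_comm, mul_left_comm]

lemma contract_kulkarniNomizu_one_of_transpose_eq {A : Matrix ι ι R} (hA : Aᵀ = A)
    (P : Matrix ι ι R) :
    contract (kulkarniNomizu P 1) A A = 2 * (trace (P * A) * trace A - trace (P * A * A)) := by
  simp only [contract_kulkarniNomizu, hA, Matrix.one_mul, Matrix.mul_one, ← trace_mul_cycle P A A]
  ring

theorem contract_weyl_decomposition {A : Matrix ι ι ℝ} (hA : Aᵀ = A) (u : ι → ℝ)
    {n : ℝ} (hn0 : n ≠ 0) (hn1 : n - 1 ≠ 0) (hn2 : n - 2 ≠ 0) (α C R W : ℝ)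
    (hR : R = trace A - C + α * (u ⬝ᵥ u)) :
    W + 1 / (n - 2) * contract (kulkarniNomizu (A + α • vecMulVec u u - (C / n) • 1) 1) A A
        - R / ((n - 1) * (n - 2)) / 2 * contract (kulkarniNomizu 1 1) A A
        - α / 2 * contract (vecTensor u) A A =
      1 / (n - 2) * ((2 * n - 1) / (n - 1) * trace A * trace (A * A)
          - 2 * trace (A * A * A) - trace A ^ 3 / (n - 1))
        + W
        - 1 / (n - 1) * (C / n + α * (u ⬝ᵥ u) / (n - 2)) * (trace A ^ 2 - trace (A * A))
        + 2 * α / (n - 2) * (trace A * (u ⬝ᵥ A *ᵥ u) - n / 2 * (u ⬝ᵥ (A * A) *ᵥ u)) := by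
  rw [contract_kulkarniNomizu_one_of_transpose_eq hA, contract_kulkarniNomizu_one_of_transpose_eq hA,
    contract_vecTensor, hA, hR]
  simp only [Matrix.mul_assoc, Matrix.add_mul, Matrix.sub_mul, Matrix.smul_mul, Matrix.one_mul,
    trace_add, trace_sub, trace_smul, trace_vecMulVec_mul, smul_eq_mul]
  field_simp
  ring

end Matrix

namespace OrthonormalBasis

variable {V ι : Type*} [NormedAddCommGroup V] [InnerProductSpace ℝ V] [Fintype ι]
  (e : OrthonormalBasis ι ℝ V)

lemma sum_inner_mul_apply (f : V →ₗ[ℝ] ℝ) (x : V) : ∑ i, ⟪e i, x⟫ * f (e i) = f x := by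
  conv_rhs => rw [← e.sum_repr' x]
  simp only [map_sum, map_smul, smul_eq_mul]

lemma apply_eq_dotProduct_mulVec (B : V →ₗ[ℝ] V →ₗ[ℝ] ℝ) (x y : V) :
    B x y = (fun i => ⟪e i, x⟫) ⬝ᵥ (of fun i j => B (e i) (e j)) *ᵥ (fun j => ⟪e j, y⟫) := by
  rw [← B.flip_apply x y, ← e.sum_inner_mul_apply (B.flip y) x]
  refine Finset.sum_congr rfl fun i _ => ?_
  rw [LinearMap.flip_apply, ← e.sum_inner_mul_apply (B (e i)) y]
  simp only [mulVec, dotProduct, of_apply, mul_comm]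

lemma sum_apply_mul_apply (B : V →ₗ[ℝ] V →ₗ[ℝ] ℝ) (x y : V) :
    ∑ k, B x (e k) * B (e k) y =
      (fun i => ⟪e i, x⟫) ⬝ᵥ ((of fun i j => B (e i) (e j)) * of fun i j => B (e i) (e j)) *ᵥ
        (fun j => ⟪e j, y⟫) := by
  rw [← mulVec_mulVec, dotProduct_mulVec]
  refine Finset.sum_congr rfl fun k _ => ?_
  rw [← B.flip_apply x (e k), ← e.sum_inner_mul_apply (B.flip (e k)) x,
    ← e.sum_inner_mul_apply (B (e k)) y]
  simp only [vecMul, mulVec, dotProduct, of_apply, LinearMap.flip_apply, mul_comm]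

end OrthonormalBasis

lemma swap_outer_of_curvature_symm {V : Type*} (Rm : V → V → V → V → ℝ)
    (hanti1 : ∀ x y z w : V, Rm x y z w = - Rm y x z w)
    (hanti2 : ∀ x y z w : V, Rm x y z w = - Rm x y w z)
    (hsymm : ∀ x y z w : V, Rm x y z w = Rm z w x y) (x a y : V) :
    Rm x a a y = Rm y a a x := by
  rw [hsymm x a a y, hanti1 a y x a, hanti2 y a x a, neg_neg]

lemma contract_basis_eq_weyl_add {V ι : Type*} [NormedAddCommGroup V] [InnerProductSpace ℝ V]
    [Fintype ι] [DecidableEq ι] (e : OrthonormalBasis ι ℝ V)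
    (Rm Sm W : V → V → V → V → ℝ) (Ric : V → V → ℝ) (n R α : ℝ) (v : V)
    (hSm : ∀ x y z w : V, Sm x y z w =
      Rm x y z w - (α / 2) * (⟪y, w⟫ * ⟪x, v⟫ * ⟪z, v⟫ + ⟪z, w⟫ * ⟪x, v⟫ * ⟪y, v⟫))
    (hW : ∀ x y z w : V, W x y z w =
      Rm x y z w
        - (1 / (n - 2)) * (Ric x w * ⟪y, z⟫ + Ric y z * ⟪x, w⟫
            - Ric x z * ⟪y, w⟫ - Ric y w * ⟪x, z⟫)
        + (R / ((n - 1) * (n - 2))) * (⟪x, w⟫ * ⟪y, z⟫ - ⟪x, z⟫ * ⟪y, w⟫))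
    (A : Matrix ι ι ℝ) :
    contract (fun k i j l => Sm (e k) (e i) (e j) (e l)) A A =
      contract (fun k i j l => W (e k) (e i) (e j) (e l)) A A
        + 1 / (n - 2) * contract (kulkarniNomizu (of fun i j => Ric (e i) (e j)) 1) A A
        - R / ((n - 1) * (n - 2)) / 2 * contract (kulkarniNomizu 1 1) A A
        - α / 2 * contract (vecTensor fun i => ⟪e i, v⟫) A A := by
  simp only [← contract_smul, ← contract_add, ← contract_sub]
  congr 1
  funext k i j l
  simp only [hSm, hW, kulkarniNomizu, vecTensor, e.inner_eq_ite, one_apply, of_apply,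
    Pi.add_apply, Pi.sub_apply, Pi.smul_apply, smul_eq_mul]
  ring

theorem sm_contraction_identity_general
    {V : Type*} [NormedAddCommGroup V] [InnerProductSpace ℝ V]
    {m : ℕ} (hm : 3 ≤ m) (e : OrthonormalBasis (Fin m) ℝ V)
    (Rm : V →ₗ[ℝ] V →ₗ[ℝ] V →ₗ[ℝ] V →ₗ[ℝ] ℝ)
    (hanti1 : ∀ x y z w : V, Rm x y z w = - Rm y x z w)
    (hanti2 : ∀ x y z w : V, Rm x y z w = - Rm x y w z)
    (hsymm : ∀ x y z w : V, Rm x y z w = Rm z w x y)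
    (α : ℝ) (v : V) (C : ℝ)
    (Sm : V → V → V → V → ℝ)
    (hSm : ∀ x y z w : V, Sm x y z w =
      Rm x y z w - (α / 2) * (⟪y, w⟫ * ⟪x, v⟫ * ⟪z, v⟫ + ⟪z, w⟫ * ⟪x, v⟫ * ⟪y, v⟫))
    (Ric : V → V → ℝ)
    (hRic : ∀ x y : V, Ric x y = ∑ i, Rm x (e i) (e i) y)
    (R : ℝ) (hR : R = ∑ i, Ric (e i) (e i))
    (Sic : V → V → ℝ)
    (hSic : ∀ x y : V, Sic x y = Ric x y - α * ⟪x, v⟫ * ⟪y, v⟫)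
    (S : ℝ) (hS : S = R - α * ‖v‖ ^ 2)
    (W : V → V → V → V → ℝ)
    (hW : ∀ x y z w : V, W x y z w =
      Rm x y z w
        - (1 / ((m : ℝ) - 2)) * (Ric x w * ⟪y, z⟫ + Ric y z * ⟪x, w⟫
            - Ric x z * ⟪y, w⟫ - Ric y w * ⟪x, z⟫)
        + (R / (((m : ℝ) - 1) * ((m : ℝ) - 2))) * (⟪x, w⟫ * ⟪y, z⟫ - ⟪x, z⟫ * ⟪y, w⟫))
    (Sic' : V → V → ℝ)
    (hSic' : ∀ x y : V, Sic' x y = Sic x y + (C / (m : ℝ)) * ⟪x, y⟫)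
    (S' : ℝ) (hS' : S' = S + C)
    -- `Sm(Sic',Sic')` and `W(Sic',Sic')`
    (SmSS WSS : ℝ)
    (hSmSS : SmSS = ∑ i, ∑ j, ∑ k, ∑ l,
      Sm (e k) (e i) (e j) (e l) * Sic' (e k) (e l) * Sic' (e i) (e j))
    (hWSS : WSS = ∑ i, ∑ j, ∑ k, ∑ l,
      W (e k) (e i) (e j) (e l) * Sic' (e k) (e l) * Sic' (e i) (e j))
    -- `|Sic'|²`, `tr(Sic'³)` and the quadratic form of `Sic'²` at `v`
    (nSic'sq trSic'cube Sic'sq_vv : ℝ)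
    (hn : nSic'sq = ∑ i, ∑ j, (Sic' (e i) (e j)) ^ 2)
    (htr : trSic'cube = ∑ i, ∑ j, ∑ k, Sic' (e i) (e j) * Sic' (e j) (e k) * Sic' (e k) (e i))
    (hsq : Sic'sq_vv = ∑ k, Sic' v (e k) * Sic' (e k) v) :
    SmSS = (1 / ((m : ℝ) - 2)) * ((2 * (m : ℝ) - 1) / ((m : ℝ) - 1) * S' * nSic'sq
            - 2 * trSic'cube - S' ^ 3 / ((m : ℝ) - 1))
        + WSS
        - (1 / ((m : ℝ) - 1)) * (C / (m : ℝ) + α * ‖v‖ ^ 2 / ((m : ℝ) - 2))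
            * (S' ^ 2 - nSic'sq)
        + (2 * α / ((m : ℝ) - 2)) * (S' * Sic' v v - ((m : ℝ) / 2) * Sic'sq_vv) := by
  have hm3 : (3 : ℝ) ≤ m := by exact_mod_cast hm
  obtain ⟨B, hB⟩ : ∃ B : V →ₗ[ℝ] V →ₗ[ℝ] ℝ, ∀ x y, Sic' x y = B x y :=
    ⟨∑ i, (Rm.flip (e i)).flip (e i) - α • (innerₗ V v).smulRight (innerₗ V v)
      + (C / m) • innerₗ V, fun x y => by simp [hSic', hSic, hRic, real_inner_comm, mul_assoc]⟩
  set u : Fin m → ℝ := fun i => ⟪e i, v⟫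
  set A : Matrix (Fin m) (Fin m) ℝ := of fun i j => Sic' (e i) (e j)
  have hBA : (of fun i j => B (e i) (e j)) = A := ext fun i j => (hB _ _).symm
  have hAT : Aᵀ = A := ext fun i j => by
    simp only [A, transpose_apply, of_apply, hSic', hSic, hRic, real_inner_comm,
      swap_outer_of_curvature_symm _ hanti1 hanti2 hsymm (e j)]
    ring
  have hRicA : (of fun i j => Ric (e i) (e j)) = A + α • vecMulVec u u - (C / m) • 1 :=
    ext fun i j => by
      simp only [A, u, of_apply, hSic', hSic, e.inner_eq_ite, one_apply, Matrix.add_apply,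
        Matrix.sub_apply, Matrix.smul_apply, vecMulVec_apply, smul_eq_mul]
      ring
  have hu : u ⬝ᵥ u = ‖v‖ ^ 2 := by simp only [u, dotProduct, ← sq, e.sum_sq_inner_right]
  have htrA : trace A = S' := by
    have h := congrArg trace hRicA
    simp only [trace_sub, trace_add, trace_smul, trace_vecMulVec, trace_one, Fintype.card_fin,
      smul_eq_mul, div_mul_cancel₀ C (by positivity : (m : ℝ) ≠ 0), hu] at h
    rw [hS', hS, hR, ← show trace (of fun i j => Ric (e i) (e j)) = ∑ i, Ric (e i) (e i) from rfl, h]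
    ring
  have hn' : nSic'sq = trace (A * A) := by
    nth_rw 2 [← hAT]
    exact hn.trans (trace_mul_transpose A).symm
  have htr' : trSic'cube = trace (A * A * A) := by rw [trace_mul_mul]; exact htr
  have hSicvv : Sic' v v = u ⬝ᵥ A *ᵥ u := by rw [hB, e.apply_eq_dotProduct_mulVec B v v, hBA]
  have hSic'sq : Sic'sq_vv = u ⬝ᵥ (A * A) *ᵥ u := by
    simp only [hsq, hB]
    rw [e.sum_apply_mul_apply B v v, hBA]
  rw [show SmSS = contract _ A A from hSmSS, show WSS = contract _ A A from hWSS,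
    contract_basis_eq_weyl_add e _ Sm W Ric m R α v hSm hW, hRicA,
    contract_weyl_decomposition hAT u (by positivity) (by linarith) (by linarith) α C R _
      (by rw [htrA, hu, hS', hS]; ring),
    hn', htr', hSicvv, hSic'sq, htrA, hu]

/-- Contraction identity (2.16) for `Sm(Sic',Sic')`. -/
theorem sm_contraction_identity
    {V : Type*} [NormedAddCommGroup V] [InnerProductSpace ℝ V]
    {m : ℕ} (hm : 3 ≤ m) (e : OrthonormalBasis (Fin m) ℝ V)
    (Rm : V →ₗ[ℝ] V →ₗ[ℝ] V →ₗ[ℝ] V →ₗ[ℝ] ℝ)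
    (hanti1 : ∀ x y z w : V, Rm x y z w = - Rm y x z w)
    (hanti2 : ∀ x y z w : V, Rm x y z w = - Rm x y w z)
    (hsymm : ∀ x y z w : V, Rm x y z w = Rm z w x y)
    (hbianchi : ∀ x y z w : V, Rm x y z w + Rm y z x w + Rm z x y w = 0)
    (α : ℝ) (v : V) (C : ℝ)
    (Sm : V → V → V → V → ℝ)
    (hSm : ∀ x y z w : V, Sm x y z w =
      Rm x y z w - (α / 2) * (⟪y, w⟫ * ⟪x, v⟫ * ⟪z, v⟫ + ⟪z, w⟫ * ⟪x, v⟫ * ⟪y, v⟫))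
    (Ric : V → V → ℝ)
    (hRic : ∀ x y : V, Ric x y = ∑ i, Rm x (e i) (e i) y)
    (R : ℝ) (hR : R = ∑ i, Ric (e i) (e i))
    (Sic : V → V → ℝ)
    (hSic : ∀ x y : V, Sic x y = Ric x y - α * ⟪x, v⟫ * ⟪y, v⟫)
    (S : ℝ) (hS : S = R - α * ‖v‖ ^ 2)
    (W : V → V → V → V → ℝ)
    (hW : ∀ x y z w : V, W x y z w =
      Rm x y z w
        - (1 / ((m : ℝ) - 2)) * (Ric x w * ⟪y, z⟫ + Ric y z * ⟪x, w⟫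
            - Ric x z * ⟪y, w⟫ - Ric y w * ⟪x, z⟫)
        + (R / (((m : ℝ) - 1) * ((m : ℝ) - 2))) * (⟪x, w⟫ * ⟪y, z⟫ - ⟪x, z⟫ * ⟪y, w⟫))
    (Sic' : V → V → ℝ)
    (hSic' : ∀ x y : V, Sic' x y = Sic x y + (C / (m : ℝ)) * ⟪x, y⟫)
    (S' : ℝ) (hS' : S' = S + C)
    -- `Sm(Sic',Sic')` and `W(Sic',Sic')`
    (SmSS WSS : ℝ)
    (hSmSS : SmSS = ∑ i, ∑ j, ∑ k, ∑ l,
      Sm (e k) (e i) (e j) (e l) * Sic' (e k) (e l) * Sic' (e i) (e j))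
    (hWSS : WSS = ∑ i, ∑ j, ∑ k, ∑ l,
      W (e k) (e i) (e j) (e l) * Sic' (e k) (e l) * Sic' (e i) (e j))
    -- `|Sic'|²`, `tr(Sic'³)` and the quadratic form of `Sic'²` at `v`
    (nSic'sq trSic'cube Sic'sq_vv : ℝ)
    (hn : nSic'sq = ∑ i, ∑ j, (Sic' (e i) (e j)) ^ 2)
    (htr : trSic'cube = ∑ i, ∑ j, ∑ k, Sic' (e i) (e j) * Sic' (e j) (e k) * Sic' (e k) (e i))
    (hsq : Sic'sq_vv = ∑ k, Sic' v (e k) * Sic' (e k) v) :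
    SmSS = (1 / ((m : ℝ) - 2)) * ((2 * (m : ℝ) - 1) / ((m : ℝ) - 1) * S' * nSic'sq
            - 2 * trSic'cube - S' ^ 3 / ((m : ℝ) - 1))
        + WSS
        - (1 / ((m : ℝ) - 1)) * (C / (m : ℝ) + α * ‖v‖ ^ 2 / ((m : ℝ) - 2))
            * (S' ^ 2 - nSic'sq)
        + (2 * α / ((m : ℝ) - 2)) * (S' * Sic' v v - ((m : ℝ) / 2) * Sic'sq_vv) :=
  sm_contraction_identity_general hm e Rm hanti1 hanti2 hsymm α v C Sm hSm Ric hRic R hR Sic hSic S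
    hS W hW Sic' hSic' S' hS' SmSS WSS hSmSS hWSS nSic'sq trSic'cube Sic'sq_vv hn htr hsq
end
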